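/- In the thresholded PPA with threshold α ∈ [0,1), define PPI_i^α using only indices j with |R_{i,j}| > α (the diagonal j = i always included since R_{i,i} = 1 > α). If all pairwise importances satisfy |PI_{i,j}| ≤ C, then |PPI_i^α − PPI_i^0| ≤ 2C·(Σ_{j: 0 < |R_{i,j}| ≤ α} |R_{i,j}|) / (Σ_j included in PPI_i^0 |R_{i,j}|). -/

import Mathlib

/-! Splitting the full index set into the retained pairs `s` and the discarded pairs `t`, with
masses `a = ∑ₛ w` and `d = ∑ₜ w` and weighted sums `A`, `E`, the two averages differ by
`(A d - E a) / (a (a + d))`. Both `|A d|` and `|E a|` are at most `C a d`, which gives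
`2 C d / (a + d)`. -/

open Finset

theorem abs_sum_mul_le_mul_sum {ι : Type*} (s : Finset ι) (w x : ι → ℝ) (C : ℝ)
    (hw : ∀ j ∈ s, 0 ≤ w j) (hx : ∀ j ∈ s, |x j| ≤ C) :
    |∑ j ∈ s, w j * x j| ≤ C * ∑ j ∈ s, w j :=
  calc |∑ j ∈ s, w j * x j| ≤ ∑ j ∈ s, |w j * x j| := abs_sum_le_sum_abs _ _
    _ ≤ ∑ j ∈ s, C * w j := sum_le_sum fun j hj => by
        rw [abs_mul, abs_of_nonneg (hw j hj), mul_comm]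
        exact mul_le_mul_of_nonneg_right (hx j hj) (hw j hj)
    _ = C * ∑ j ∈ s, w j := (mul_sum _ _ _).symm

theorem abs_div_sub_add_div_add_le {A E a d C : ℝ} (ha : 0 < a) (hd : 0 ≤ d)
    (hA : |A| ≤ C * a) (hE : |E| ≤ C * d) :
    |A / a - (A + E) / (a + d)| ≤ 2 * C * d / (a + d) := by
  have had : 0 < a + d := by linarith
  have hdiff : A / a - (A + E) / (a + d) = (A * d - E * a) / (a * (a + d)) := by
    field_simp
    ring
  have hnum : |A * d - E * a| ≤ 2 * C * d * a :=
    calc |A * d - E * a| ≤ |A| * d + |E| * a := by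
          simpa only [abs_mul, abs_of_nonneg hd, abs_of_pos ha] using abs_sub (A * d) (E * a)
      _ ≤ C * a * d + C * d * a := by gcongr
      _ = 2 * C * d * a := by ring
  rw [hdiff, abs_div, abs_of_pos (mul_pos ha had), div_le_div_iff₀ (mul_pos ha had) had]
  nlinarith

theorem abs_div_sum_sub_div_sum_union_le {ι : Type*} [DecidableEq ι] {s t : Finset ι}
    (hst : Disjoint s t) (w x : ι → ℝ) (C : ℝ) (hw : ∀ j ∈ s ∪ t, 0 ≤ w j)
    (hs : 0 < ∑ j ∈ s, w j) (hx : ∀ j ∈ s ∪ t, |x j| ≤ C) :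
    |(∑ j ∈ s, w j * x j) / (∑ j ∈ s, w j) -
        (∑ j ∈ s ∪ t, w j * x j) / (∑ j ∈ s ∪ t, w j)|
      ≤ 2 * C * (∑ j ∈ t, w j) / (∑ j ∈ s ∪ t, w j) := by
  have hs_sub : s ⊆ s ∪ t := subset_union_left
  have ht_sub : t ⊆ s ∪ t := subset_union_right
  rw [sum_union hst, sum_union hst]
  exact abs_div_sub_add_div_add_le hs (sum_nonneg fun j hj => hw j (ht_sub hj))
    (abs_sum_mul_le_mul_sum s w x C (fun j hj => hw j (hs_sub hj)) fun j hj => hx j (hs_sub hj))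
    (abs_sum_mul_le_mul_sum t w x C (fun j hj => hw j (ht_sub hj)) fun j hj => hx j (ht_sub hj))

/-- Error bound for the thresholded pairwise permutation importance: dropping
the pairs with correlation at most `α` changes the PPI by at most
`2C · (discarded correlation mass) / (total correlation mass)`. -/
theorem thresholded_PPI_error_bound
    {M : ℕ} (R : Matrix (Fin M) (Fin M) ℝ) (PI : Fin M → Fin M → ℝ)
    (i : Fin M) (hdiag : R i i = 1)
    (α : ℝ) (hα : α ∈ Set.Ico (0 : ℝ) 1)
    (C : ℝ) (hC : ∀ j, |PI i j| ≤ C) :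
    |(∑ j ∈ univ.filter (fun j => α < |R i j|), |R i j| * PI i j) /
        (∑ j ∈ univ.filter (fun j => α < |R i j|), |R i j|) -
      (∑ j ∈ univ.filter (fun j => (0 : ℝ) < |R i j|), |R i j| * PI i j) /
        (∑ j ∈ univ.filter (fun j => (0 : ℝ) < |R i j|), |R i j|)|
    ≤ 2 * C *
        (∑ j ∈ univ.filter (fun j => (0 : ℝ) < |R i j| ∧ |R i j| ≤ α), |R i j|) /
        (∑ j ∈ univ.filter (fun j => (0 : ℝ) < |R i j|), |R i j|) := by
  obtain ⟨hα0, hα1⟩ := hα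
  have hsplit : univ.filter (fun j => (0 : ℝ) < |R i j|) =
      univ.filter (fun j => α < |R i j|) ∪
        univ.filter (fun j => (0 : ℝ) < |R i j| ∧ |R i j| ≤ α) := by
    rw [← filter_or]
    refine filter_congr fun j _ => ⟨fun h => ?_, ?_⟩
    · exact (lt_or_ge α |R i j|).imp_right (⟨h, ·⟩)
    · rintro (h | h)
      exacts [hα0.trans_lt h, h.1]
  have hdisj : Disjoint (univ.filter (fun j => α < |R i j|))
      (univ.filter (fun j => (0 : ℝ) < |R i j| ∧ |R i j| ≤ α)) :=
    disjoint_filter.2 fun _ _ h h' => h'.2.not_gt h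
  have hpos : 0 < ∑ j ∈ univ.filter (fun j => α < |R i j|), |R i j| := by
    have hi : α < |R i i| := by rwa [hdiag, abs_one]
    exact lt_of_lt_of_le (hα0.trans_lt hi)
      (single_le_sum (fun j _ => abs_nonneg (R i j)) (mem_filter.2 ⟨mem_univ i, hi⟩))
  rw [hsplit]
  exact abs_div_sum_sub_div_sum_union_le hdisj _ _ C (fun j _ => abs_nonneg _) hpos
    fun j _ => hC j
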